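/- Let T be a finite tree with at least two vertices whose complement graph T̄ is connected, and let k ≥ 2 be an integer. Then γ_{t[1,2]}(T̄) = γ_{t[1,k]}(T̄) = 2. -/

import Mathlib

open SimpleGraph

/-- The lexicographic product of two simple graphs. -/
def SimpleGraph.lexProd {V W : Type*} (G : SimpleGraph V) (H : SimpleGraph W) :
    SimpleGraph (V × W) where
  Adj p q := G.Adj p.1 q.1 ∨ (p.1 = q.1 ∧ H.Adj p.2 q.2)
  symm := by
    constructor
    rintro p q (h | ⟨e, h⟩)
    · exact Or.inl h.symm
    · exact Or.inr ⟨e.symm, h.symm⟩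
  loopless := by
    constructor
    rintro p (h | ⟨_, h⟩)
    · exact G.irrefl h
    · exact H.irrefl h

/-- The `H`-layer of the product over a vertex `v` of `G`: all pairs with first
coordinate `v`. -/
def layer {V W : Type*} (v : V) : Set (V × W) := {p | p.1 = v}

/-- `S` is a `[1,k]`-set of `G`: every vertex outside `S` has at least `1` and at
most `k` neighbors in `S`. -/
def IsOneK {V : Type*} (G : SimpleGraph V) (k : ℕ) (S : Set V) : Prop :=
  ∀ v ∉ S, 1 ≤ (G.neighborSet v ∩ S).ncard ∧ (G.neighborSet v ∩ S).ncard ≤ k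

/-- `S` is a total `[1,k]`-set of `G`: every vertex has at least `1` and at most `k`
neighbors in `S`. -/
def IsTotalOneK {V : Type*} (G : SimpleGraph V) (k : ℕ) (S : Set V) : Prop :=
  ∀ v, 1 ≤ (G.neighborSet v ∩ S).ncard ∧ (G.neighborSet v ∩ S).ncard ≤ k

/-- `S` is an independent `[1,k]`-set of `G`. -/
def IsIndepOneK {V : Type*} (G : SimpleGraph V) (k : ℕ) (S : Set V) : Prop :=
  IsOneK G k S ∧ ∀ v ∈ S, ∀ w ∈ S, ¬ G.Adj v w

/-- `S` is `j`-dependent: every vertex of `S` has at most `j` neighbors in `S`. -/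
def IsJDep {V : Type*} (G : SimpleGraph V) (j : ℕ) (S : Set V) : Prop :=
  ∀ v ∈ S, (G.neighborSet v ∩ S).ncard ≤ j

/-- `S` is an efficient dominating set of `G`. -/
def IsEffDom {V : Type*} (G : SimpleGraph V) (S : Set V) : Prop :=
  (∀ v ∉ S, (G.neighborSet v ∩ S).ncard = 1) ∧ ∀ v ∈ S, (G.neighborSet v ∩ S).ncard = 0

/-- Membership in `SD^j_{[1,k]}(G)`: a `j`-dependent `[1,k]`-set such that every
vertex of `S` with no neighbor in `S` is at distance at least `3` from every other
vertex of `S`. -/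
def InSD {V : Type*} (G : SimpleGraph V) (k j : ℕ) (S : Set V) : Prop :=
  IsOneK G k S ∧ IsJDep G j S ∧
    ∀ v ∈ S, (G.neighborSet v ∩ S).ncard = 0 → ∀ v' ∈ S, v' ≠ v → 3 ≤ G.dist v v'

/-- The `[1,k]`-domination number `γ_{[1,k]}`. -/
noncomputable def gammaOneK {V : Type*} (G : SimpleGraph V) (k : ℕ) : ℕ :=
  sInf {n | ∃ S : Set V, IsOneK G k S ∧ S.ncard = n}

/-- The total `[1,k]`-domination number `γ_{t[1,k]}`. -/
noncomputable def gammaTotalOneK {V : Type*} (G : SimpleGraph V) (k : ℕ) : ℕ :=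
  sInf {n | ∃ S : Set V, IsTotalOneK G k S ∧ S.ncard = n}

/-- The `[1,k]`-independence number `γ_{i[1,k]}`. -/
noncomputable def gammaIndepOneK {V : Type*} (G : SimpleGraph V) (k : ℕ) : ℕ :=
  sInf {n | ∃ S : Set V, IsIndepOneK G k S ∧ S.ncard = n}

/-- `D` is a dominating set of `G`. -/
def IsDomSet {V : Type*} (G : SimpleGraph V) (D : Set V) : Prop :=
  ∀ v ∉ D, ∃ u ∈ D, G.Adj v u

/-- `D` is a total dominating set of `G`. -/
def IsTotalDomSet {V : Type*} (G : SimpleGraph V) (D : Set V) : Prop :=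
  ∀ v, ∃ u ∈ D, G.Adj v u

/-- The domination number `γ`. -/
noncomputable def gammaDom {V : Type*} (G : SimpleGraph V) : ℕ :=
  sInf {n | ∃ D : Set V, IsDomSet G D ∧ D.ncard = n}

/-- The total domination number `γ_t`. -/
noncomputable def gammaTotalDom {V : Type*} (G : SimpleGraph V) : ℕ :=
  sInf {n | ∃ D : Set V, IsTotalDomSet G D ∧ D.ncard = n}

/-!
Let `a` be a leaf of `T` with neighbour `p`. Since `T̄` is connected, `p` is not universal in `T`,
so some `b ≠ p` is not adjacent to `p`. Then `a` and `b` are adjacent in `T̄` and have no common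
neighbour in `T`, so every vertex is adjacent in `T̄` to `a` or to `b`: the pair `{a, b}` is a total
dominating set of `T̄`, hence a total `[1,k]`-set for all `k ≥ 2`. A total dominating set of a
nonempty graph has at least two vertices, so `2` is optimal.
-/

section

variable {V : Type*} {G : SimpleGraph V} {k : ℕ} {S : Set V}

theorem IsTotalOneK.isTotalDomSet (h : IsTotalOneK G k S) : IsTotalDomSet G S := fun v ↦
  let ⟨u, hu, huS⟩ := Set.nonempty_of_ncard_ne_zero (Nat.one_le_iff_ne_zero.1 (h v).1)
  ⟨u, huS, hu⟩

theorem IsTotalDomSet.isTotalOneK (h : IsTotalDomSet G S) (hS : S.Finite) (hk : S.ncard ≤ k) :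
    IsTotalOneK G k S := by
  intro v
  obtain ⟨u, huS, hvu⟩ := h v
  have hfin : (G.neighborSet v ∩ S).Finite := hS.inter_of_right _
  exact ⟨(Set.ncard_pos hfin).2 ⟨u, hvu, huS⟩,
    (Set.ncard_le_ncard Set.inter_subset_right hS).trans hk⟩

theorem IsTotalDomSet.two_le_ncard [Finite V] [Nonempty V] (h : IsTotalDomSet G S) :
    2 ≤ S.ncard := by
  obtain ⟨u, huS, -⟩ := h (Classical.arbitrary V)
  obtain ⟨w, hwS, huw⟩ := h u
  exact (Set.one_lt_ncard (Set.toFinite S)).2 ⟨u, huS, w, hwS, huw.ne⟩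

theorem gammaTotalOneK_eq_two [Finite V] [Nonempty V] (hS : IsTotalOneK G k S)
    (hcard : S.ncard = 2) : gammaTotalOneK G k = 2 :=
  le_antisymm (Nat.sInf_le ⟨S, hS, hcard⟩)
    (le_csInf ⟨2, S, hS, hcard⟩ fun _ ⟨_, h, hn⟩ ↦ hn ▸ h.isTotalDomSet.two_le_ncard)

theorem isTotalDomSet_compl_pair {a b : V} (hab : Gᶜ.Adj a b)
    (hcommon : ∀ v, G.Adj v a → ¬G.Adj v b) : IsTotalDomSet Gᶜ {a, b} := by
  intro v
  by_cases hva : v = a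
  · exact ⟨b, by simp, hva ▸ hab⟩
  by_cases hvb : v = b
  · exact ⟨a, by simp, hvb ▸ hab.symm⟩
  by_cases hGva : G.Adj v a
  · exact ⟨b, by simp, (compl_adj G v b).2 ⟨hvb, hcommon v hGva⟩⟩
  · exact ⟨a, by simp, (compl_adj G v a).2 ⟨hva, hGva⟩⟩

theorem compl_adj_and_no_common_adj_of_leaf {a p b : V} (hp : G.Adj a p)
    (hleaf : ∀ q, G.Adj a q → q = p) (hb : Gᶜ.Adj p b) :
    Gᶜ.Adj a b ∧ ∀ v, G.Adj v a → ¬G.Adj v b := by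
  obtain ⟨hpb, hGpb⟩ := (compl_adj G p b).1 hb
  refine ⟨(compl_adj G a b).2 ⟨?_, fun hab ↦ hpb (hleaf b hab).symm⟩, fun v hva ↦ ?_⟩
  · rintro rfl
    exact hGpb hp.symm
  · rwa [hleaf v hva.symm]

end

/-- If `T` is a tree on at least two vertices whose complement is
connected, then `γ_{t[1,2]}(T̄) = γ_{t[1,k]}(T̄) = 2` for every `k ≥ 2`. -/
theorem stmt2 {V : Type*} [Fintype V] (T : SimpleGraph V) (htree : T.IsTree)
    (hn : 2 ≤ Fintype.card V) (hconn : Tᶜ.Connected) (k : ℕ) (hk : 2 ≤ k) :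
    gammaTotalOneK Tᶜ 2 = 2 ∧ gammaTotalOneK Tᶜ k = 2 := by
  classical
  have : Nontrivial V := Fintype.one_lt_card_iff_nontrivial.1 hn
  obtain ⟨a, ha⟩ := htree.exists_vert_degree_one_of_nontrivial
  obtain ⟨p, hp, hleaf⟩ := degree_eq_one_iff_existsUnique_adj.1 ha
  obtain ⟨b, hb⟩ := hconn.preconnected.exists_adj_of_nontrivial p
  obtain ⟨hab, hcommon⟩ := compl_adj_and_no_common_adj_of_leaf hp hleaf hb
  have hcard : ({a, b} : Set V).ncard = 2 := Set.ncard_pair hab.ne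
  have hgamma (k' : ℕ) (hk' : 2 ≤ k') : gammaTotalOneK Tᶜ k' = 2 :=
    gammaTotalOneK_eq_two
      ((isTotalDomSet_compl_pair hab hcommon).isTotalOneK (Set.toFinite _) (hcard ▸ hk')) hcard
  exact ⟨hgamma 2 le_rfl, hgamma k hk⟩
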